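/- arXiv:1604.05259 — 5 statements merged into one kernel-verified Lean document; each statement's English description precedes it below -/
import Mathlib

section
/- Let d be a positive integer, α ∈ [0, d) and β ∈ (d, ∞). Then for all x ∈ ℝ^d, ∫_{ℝ^d \ {x}} ⟨y⟩^{-β} |x − y|^{-α} dy ≤ K, where K is the explicit constant K = (2 π^{d/2} / Γ(d/2)) · [ 1/(d − α) + ∫₀^∞ r^{d−1} (1 + r²)^{−β/2} dr ]. -/
/-!
Split the integrand according to whether `‖x - y‖ < 1`: on the unit ball around `x` the factor
`⟨y⟩^{-β}` is at most `1`, outside it `‖x - y‖^{-α}` is. After translating the first piece, both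
bounds are radial, and polar coordinates (the unit sphere has area `d · |B₁| = 2π^{d/2} / Γ(d/2)`)
reduce them to `∫₀¹ r^{d-1-α} dr = 1 / (d - α)` and to the one-dimensional integral of the constant.
-/

open MeasureTheory Real

/-- The "inhomogeneous norm" (Japanese bracket) `⟨y⟩ = (1 + |y|²)^{1/2}`. -/
noncomputable def jb {n : ℕ} (y : EuclideanSpace ℝ (Fin n)) : ℝ :=
  (1 + ‖y‖ ^ 2) ^ ((1 : ℝ) / 2)

open Set Metric ENNReal Module

theorem lintegral_Ioo_zero_one_rpow {s : ℝ} (hs : -1 < s) :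
    ∫⁻ r in Ioo (0 : ℝ) 1, ENNReal.ofReal (r ^ s) = ENNReal.ofReal (1 / (s + 1)) := by
  rw [setLIntegral_congr Ioo_ae_eq_Ioc, ← ofReal_integral_eq_lintegral_ofReal
      (intervalIntegral.intervalIntegrable_rpow' hs).1
      (ae_restrict_of_forall_mem measurableSet_Ioc fun r hr => rpow_nonneg hr.1.le s),
    ← intervalIntegral.integral_of_le zero_le_one, integral_rpow (Or.inl hs), Real.one_rpow,
    zero_rpow (by linarith), sub_zero]

section Polar

variable {E : Type*} [NormedAddCommGroup E] [NormedSpace ℝ E] [MeasurableSpace E] [BorelSpace E]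
  [Nontrivial E] [FiniteDimensional ℝ E] (μ : Measure E) [μ.IsAddHaarMeasure]

theorem lintegral_fun_norm_addHaar (f : ℝ → ℝ≥0∞) (hf : Measurable f) :
    ∫⁻ x, f ‖x‖ ∂μ = finrank ℝ E * μ (ball 0 1) *
      ∫⁻ r in Ioi (0 : ℝ), ENNReal.ofReal (r ^ (finrank ℝ E - 1)) * f r := by
  have hf_snd : Measurable fun p : sphere (0 : E) 1 × Ioi (0 : ℝ) => f p.2 := by fun_prop
  calc ∫⁻ x, f ‖x‖ ∂μ = ∫⁻ x : ({0}ᶜ : Set E), f ‖x.1‖ ∂μ.comap (↑) := by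
        rw [lintegral_subtype_comap (measurableSet_singleton 0).compl fun x => f ‖x‖,
          restrict_compl_singleton]
    _ = ∫⁻ p : sphere (0 : E) 1 × Ioi (0 : ℝ), f p.2
          ∂μ.toSphere.prod (.volumeIoiPow (finrank ℝ E - 1)) := by
        simpa using μ.measurePreserving_homeomorphUnitSphereProd.lintegral_comp_emb
          (Homeomorph.measurableEmbedding _) (fun p => f p.2)
    _ = μ.toSphere univ * ∫⁻ r : Ioi (0 : ℝ), f r ∂.volumeIoiPow (finrank ℝ E - 1) := by
        simp [lintegral_prod _ hf_snd.aemeasurable, mul_comm]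
    _ = _ := by
        rw [Measure.toSphere_apply_univ, Measure.volumeIoiPow,
          lintegral_withDensity_eq_lintegral_mul _ (by fun_prop) (by fun_prop),
          ← lintegral_subtype_comap measurableSet_Ioi]
        rfl

theorem lintegral_indicator_Iio_one_rpow_neg_norm {α : ℝ} (hα : α < finrank ℝ E) :
    ∫⁻ x, (Iio 1).indicator (fun r => ENNReal.ofReal (r ^ (-α))) ‖x‖ ∂μ =
      finrank ℝ E * μ (ball 0 1) * ENNReal.ofReal (1 / (finrank ℝ E - α)) := by
  have hn : 0 < finrank ℝ E := finrank_pos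
  rw [lintegral_fun_norm_addHaar μ _ ((by fun_prop : Measurable fun r : ℝ =>
    ENNReal.ofReal (r ^ (-α))).indicator measurableSet_Iio)]
  congr 1
  calc ∫⁻ r in Ioi 0, ENNReal.ofReal (r ^ (finrank ℝ E - 1)) *
        (Iio 1).indicator (fun r => ENNReal.ofReal (r ^ (-α))) r
      = ∫⁻ r in Ioi 0, (Iio 1).indicator
          (fun r => ENNReal.ofReal (r ^ ((finrank ℝ E : ℝ) - 1 - α))) r := by
        refine setLIntegral_congr_fun measurableSet_Ioi fun r (hr : 0 < r) => ?_
        by_cases hr1 : r ∈ Iio 1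
        · rw [indicator_of_mem hr1, indicator_of_mem hr1, ← ofReal_mul (by positivity),
            ← Real.rpow_natCast, Nat.cast_pred hn, ← rpow_add hr, ← sub_eq_add_neg]
        · rw [indicator_of_notMem hr1, indicator_of_notMem hr1, mul_zero]
    _ = ∫⁻ r in Ioo 0 1, ENNReal.ofReal (r ^ ((finrank ℝ E : ℝ) - 1 - α)) := by
        rw [lintegral_indicator measurableSet_Iio, Measure.restrict_restrict measurableSet_Iio,
          Iio_inter_Ioi]
    _ = _ := by
        rw [lintegral_Ioo_zero_one_rpow (by linarith)]
        ring_nf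

theorem lintegral_rpow_neg_one_add_norm_sq {β : ℝ} (hβ : finrank ℝ E < β) :
    ∫⁻ x, ENNReal.ofReal ((1 + ‖x‖ ^ 2) ^ (-β / 2)) ∂μ = finrank ℝ E * μ (ball 0 1) *
      ENNReal.ofReal
        (∫ r in Ioi (0 : ℝ), r ^ ((finrank ℝ E : ℝ) - 1) * (1 + r ^ 2) ^ (-β / 2)) := by
  have hpow (r : ℝ) : r ^ ((finrank ℝ E : ℝ) - 1) = r ^ (finrank ℝ E - 1) := by
    rw [← Nat.cast_pred finrank_pos, Real.rpow_natCast]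
  rw [← ofReal_integral_eq_lintegral_ofReal (integrable_rpow_neg_one_add_norm_sq hβ)
      (ae_of_all _ fun x => by positivity),
    integral_fun_norm_addHaar μ fun r => (1 + r ^ 2) ^ (-β / 2)]
  simp only [hpow, nsmul_eq_mul, smul_eq_mul, measureReal_def]
  rw [ENNReal.ofReal_mul (by positivity), ENNReal.ofReal_mul (by positivity), ofReal_natCast,
    ofReal_toReal measure_ball_lt_top.ne, mul_assoc]

end Polar

theorem finrank_mul_volume_ball_zero_one {E : Type*} [NormedAddCommGroup E]
    [InnerProductSpace ℝ E] [FiniteDimensional ℝ E] [MeasurableSpace E] [BorelSpace E]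
    [Nontrivial E] :
    (finrank ℝ E : ℝ≥0∞) * volume (ball (0 : E) 1) = ENNReal.ofReal
      (2 * π ^ ((finrank ℝ E : ℝ) / 2) / Gamma ((finrank ℝ E : ℝ) / 2)) := by
  have hn : (0 : ℝ) < finrank ℝ E := mod_cast finrank_pos
  rw [InnerProductSpace.volume_ball, ENNReal.ofReal_one, one_pow, one_mul, ← ofReal_natCast,
    ← ENNReal.ofReal_mul (by positivity), Gamma_add_one (half_pos hn).ne', sqrt_eq_rpow,
    ← Real.rpow_natCast, ← Real.rpow_mul pi_pos.le]
  congr 1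
  field_simp

theorem jb_rpow_neg {n : ℕ} (β : ℝ) (y : EuclideanSpace ℝ (Fin n)) :
    jb y ^ (-β) = (1 + ‖y‖ ^ 2) ^ (-β / 2) := by
  rw [jb, ← Real.rpow_mul (by positivity)]
  ring_nf

theorem ofReal_jb_rpow_neg_mul_rpow_neg_le {n : ℕ} {α β : ℝ} (hα : 0 ≤ α) (hβ : 0 ≤ β)
    (x y : EuclideanSpace ℝ (Fin n)) :
    ENNReal.ofReal (jb y ^ (-β) * ‖x - y‖ ^ (-α)) ≤
      (Iio 1).indicator (fun r => ENNReal.ofReal (r ^ (-α))) ‖x - y‖ +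
        ENNReal.ofReal ((1 + ‖y‖ ^ 2) ^ (-β / 2)) := by
  have hjb : (1 + ‖y‖ ^ 2) ^ (-β / 2) ≤ 1 :=
    rpow_le_one_of_one_le_of_nonpos (by nlinarith [norm_nonneg y]) (by linarith)
  rw [jb_rpow_neg]
  by_cases hxy : ‖x - y‖ ∈ Iio 1
  · rw [indicator_of_mem hxy]
    refine le_add_right (ofReal_le_ofReal ?_)
    exact mul_le_of_le_one_left (by positivity) hjb
  · rw [indicator_of_notMem hxy, zero_add]
    refine ofReal_le_ofReal (mul_le_of_le_one_right (by positivity) ?_)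
    exact rpow_le_one_of_one_le_of_nonpos (not_lt.1 hxy) (by linarith)

/-- For `α ∈ [0, d)` and `β ∈ (d, ∞)`, for all `x ∈ ℝ^d` the integral
`∫_{ℝ^d \ {x}} ⟨y⟩^{-β} |x − y|^{-α} dy` is at most the explicit constant
`K = (2 π^{d/2} / Γ(d/2)) · [ 1/(d − α) + ∫₀^∞ r^{d−1} (1 + r²)^{−β/2} dr ]`. -/
theorem stmt1 (d : ℕ) (hd : 0 < d) (α β : ℝ) (hα0 : 0 ≤ α) (hαd : α < d) (hβ : (d : ℝ) < β) :
    ∀ x : EuclideanSpace ℝ (Fin d),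
      (∫⁻ y in ({x}ᶜ : Set (EuclideanSpace ℝ (Fin d))),
        ENNReal.ofReal (jb y ^ (-β) * ‖x - y‖ ^ (-α)))
      ≤ ENNReal.ofReal
          ((2 * Real.pi ^ ((d : ℝ) / 2) / Real.Gamma ((d : ℝ) / 2)) *
            (1 / ((d : ℝ) - α) +
              ∫ r in Set.Ioi (0 : ℝ), r ^ ((d : ℝ) - 1) * (1 + r ^ 2) ^ (-β / 2))) := by
  intro x
  have hfin : finrank ℝ (EuclideanSpace ℝ (Fin d)) = d := finrank_euclideanSpace_fin
  have : Nontrivial (EuclideanSpace ℝ (Fin d)) := Module.nontrivial_of_finrank_pos (hfin ▸ hd)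
  have hI_nonneg : 0 ≤ ∫ r in Ioi (0 : ℝ), r ^ ((d : ℝ) - 1) * (1 + r ^ 2) ^ (-β / 2) :=
    setIntegral_nonneg measurableSet_Ioi fun r (hr : 0 < r) => by positivity
  calc _ ≤ ∫⁻ y, ((Iio 1).indicator (fun r => ENNReal.ofReal (r ^ (-α))) ‖x - y‖ +
          ENNReal.ofReal ((1 + ‖y‖ ^ 2) ^ (-β / 2))) :=
        (setLIntegral_le_lintegral _ _).trans <| lintegral_mono fun y =>
          ofReal_jb_rpow_neg_mul_rpow_neg_le hα0 (by linarith [d.cast_nonneg (α := ℝ)]) x y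
    _ = d * volume (ball (0 : EuclideanSpace ℝ (Fin d)) 1) * (ENNReal.ofReal (1 / (d - α)) +
          ENNReal.ofReal (∫ r in Ioi (0 : ℝ), r ^ ((d : ℝ) - 1) * (1 + r ^ 2) ^ (-β / 2))) := by
        rw [lintegral_add_right _ (by fun_prop), lintegral_sub_left_eq_self
          (fun z => (Iio 1).indicator (fun r => ENNReal.ofReal (r ^ (-α))) ‖z‖),
          lintegral_indicator_Iio_one_rpow_neg_norm _ (by rwa [hfin]),
          lintegral_rpow_neg_one_add_norm_sq _ (by rwa [hfin]), hfin, mul_add]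
    _ = _ := by
        have hK := finrank_mul_volume_ball_zero_one (E := EuclideanSpace ℝ (Fin d))
        rw [hfin] at hK
        rw [hK, ← ofReal_add (one_div_nonneg.2 (by linarith)) hI_nonneg,
          ← ofReal_mul (by positivity)]
end

section
/- Let d be a positive integer. For all α, β ∈ [0, d/2) and every γ ∈ (d, ∞), there exists a constant K > 0 such that for all x, z ∈ ℝ^d (allowing x = z), the Lebesgue integral ∫_{ℝ^d \ {x, z}} ⟨y⟩^{-γ} |x − y|^{-α} |y − z|^{-β} dy is at most K. -/
open MeasureTheory

open Set Metric Real in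
/-- Finiteness of the integral of `‖y‖^{-δ}` over the unit ball when `0 ≤ δ < d`. -/
lemma lemA (d : ℕ) (δ : ℝ) (hδ0 : 0 ≤ δ) (hδd : δ < d) :
    (∫⁻ y in Metric.ball (0 : EuclideanSpace ℝ (Fin d)) 1,
      ENNReal.ofReal (‖y‖ ^ (-δ))) < ⊤ := by
  rcases eq_or_lt_of_le hδ0 with h0 | hδpos
  · simp only [← h0, neg_zero, Real.rpow_zero]
    rw [setLIntegral_const]
    exact ENNReal.mul_lt_top ENNReal.ofReal_lt_top measure_ball_lt_top
  set E := EuclideanSpace ℝ (Fin d)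
  set μ := (volume : Measure E).restrict (Metric.ball (0 : E) 1)
  have hmeas : Measurable fun y : E => ‖y‖ ^ (-δ) := by fun_prop
  rw [lintegral_eq_lintegral_meas_le μ
    (Filter.Eventually.of_forall fun y => by positivity) hmeas.aemeasurable]
  set B := (volume : Measure E) (Metric.ball (0 : E) 1) with hB
  have hBlt : B < ⊤ := measure_ball_lt_top
  have key : ∀ t : ℝ, 1 ≤ t →
      μ {a : E | t ≤ ‖a‖ ^ (-δ)} ≤ ENNReal.ofReal (t ^ (-((d : ℝ)/δ))) * B := by
    intro t ht
    have ht0 : (0:ℝ) < t := lt_of_lt_of_le one_pos ht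
    have hsub : {a : E | t ≤ ‖a‖ ^ (-δ)} ⊆ Metric.closedBall (0:E) (t ^ (-(1/δ))) := by
      intro a ha
      simp only [mem_setOf_eq] at ha
      simp only [Metric.mem_closedBall, dist_zero_right]
      have hna : 0 < ‖a‖ := by
        by_contra h
        push_neg at h
        have : ‖a‖ = 0 := le_antisymm h (norm_nonneg a)
        rw [this, Real.zero_rpow (neg_ne_zero.mpr hδpos.ne')] at ha
        linarith
      have this : (‖a‖ ^ (-δ)) ^ (-(1/δ)) ≤ t ^ (-(1/δ)) :=
        Real.rpow_le_rpow_of_nonpos ht0 ha (neg_nonpos.mpr (by positivity))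
      calc ‖a‖ = (‖a‖ ^ (-δ)) ^ (-(1/δ)) := by
            rw [← Real.rpow_mul (norm_nonneg a)]
            rw [show (-δ) * (-(1/δ)) = 1 by field_simp]
            simp
        _ ≤ t ^ (-(1/δ)) := this
    calc μ {a : E | t ≤ ‖a‖ ^ (-δ)}
        ≤ (volume : Measure E) (Metric.closedBall (0:E) (t ^ (-(1/δ)))) :=
          le_trans (Measure.restrict_apply_le _ _) (measure_mono hsub)
      _ = ENNReal.ofReal ((t ^ (-(1/δ))) ^ (Module.finrank ℝ E)) * B := by
          rw [Measure.addHaar_closedBall _ _ (by positivity)]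
      _ = ENNReal.ofReal (t ^ (-((d : ℝ)/δ))) * B := by
          congr 1
          rw [← Real.rpow_natCast (t ^ (-(1/δ))), ← Real.rpow_mul ht0.le]
          congr 1
          rw [finrank_euclideanSpace, Fintype.card_fin]
          field_simp
  calc (∫⁻ t in Ioi (0:ℝ), μ {a : E | t ≤ ‖a‖ ^ (-δ)})
      ≤ ∫⁻ t in Ioc (0:ℝ) 1 ∪ Ioi 1, μ {a : E | t ≤ ‖a‖ ^ (-δ)} :=
        lintegral_mono_set Ioi_subset_Ioc_union_Ioi
    _ ≤ (∫⁻ t in Ioc (0:ℝ) 1, μ {a : E | t ≤ ‖a‖ ^ (-δ)})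
        + ∫⁻ t in Ioi (1:ℝ), μ {a : E | t ≤ ‖a‖ ^ (-δ)} := lintegral_union_le _ _ _
    _ < ⊤ := by
        refine ENNReal.add_lt_top.2 ⟨?_, ?_⟩
        · calc (∫⁻ t in Ioc (0:ℝ) 1, μ {a : E | t ≤ ‖a‖ ^ (-δ)})
              ≤ ∫⁻ _ in Ioc (0:ℝ) 1, B :=
                setLIntegral_mono' measurableSet_Ioc fun t _ =>
                  le_trans (measure_mono (subset_univ _))
                    (by rw [Measure.restrict_apply_univ])
            _ < ⊤ := by
                rw [setLIntegral_const]
                exact ENNReal.mul_lt_top hBlt (by simp [Real.volume_Ioc])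
        · calc (∫⁻ t in Ioi (1:ℝ), μ {a : E | t ≤ ‖a‖ ^ (-δ)})
              ≤ ∫⁻ t in Ioi (1:ℝ), ENNReal.ofReal (t ^ (-((d : ℝ)/δ))) * B :=
                setLIntegral_mono' measurableSet_Ioi fun t ht => key t (le_of_lt ht)
            _ = (∫⁻ t in Ioi (1:ℝ), ENNReal.ofReal (t ^ (-((d : ℝ)/δ)))) * B :=
                lintegral_mul_const' B _ hBlt.ne
            _ < ⊤ := by
                refine ENNReal.mul_lt_top ?_ hBlt
                refine IntegrableOn.setLIntegral_lt_top ?_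
                apply integrableOn_Ioi_rpow_of_lt _ one_pos
                rw [neg_lt_neg_iff, lt_div_iff₀ hδpos]
                linarith

lemma jb_one_le {n : ℕ} (y : EuclideanSpace ℝ (Fin n)) : 1 ≤ jb y :=
  Real.one_le_rpow (by nlinarith [sq_nonneg ‖y‖]) (by norm_num)

lemma jb_rpow {n : ℕ} (y : EuclideanSpace ℝ (Fin n)) (γ : ℝ) :
    jb y ^ (-γ) = (1 + ‖y‖ ^ 2) ^ (-γ / 2) := by
  rw [jb, ← Real.rpow_mul (by positivity)]
  ring_nf

/-- Finiteness of the global integral of `⟨y⟩^{-γ}` for `γ > d`. -/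
lemma lemG (d : ℕ) (γ : ℝ) (hγ : (d : ℝ) < γ) :
    (∫⁻ y : EuclideanSpace ℝ (Fin d), ENNReal.ofReal (jb y ^ (-γ))) < ⊤ := by
  have h : Integrable (fun y : EuclideanSpace ℝ (Fin d) => (1 + ‖y‖ ^ 2) ^ (-γ / 2)) :=
    integrable_rpow_neg_one_add_norm_sq (by
      rwa [finrank_euclideanSpace, Fintype.card_fin])
  have h2 := h.2
  rw [HasFiniteIntegral] at h2
  refine lt_of_le_of_lt (le_of_eq ?_) h2
  refine lintegral_congr fun y => ?_
  rw [jb_rpow, ← Real.enorm_eq_ofReal (by positivity)]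

open Set Metric Real in
/-- Uniform bound on `∫ ⟨y⟩^{-γ} ‖x-y‖^{-δ}` for `0 ≤ δ < d < γ`. -/
lemma lemB (d : ℕ) (δ γ : ℝ) (hδ0 : 0 ≤ δ) (hδd : δ < d) (hγ : (d : ℝ) < γ) :
    ∃ C : ENNReal, C < ⊤ ∧ ∀ x : EuclideanSpace ℝ (Fin d),
      (∫⁻ y, ENNReal.ofReal (jb y ^ (-γ) * ‖x - y‖ ^ (-δ))) ≤ C := by
  refine ⟨(∫⁻ y in Metric.ball (0 : EuclideanSpace ℝ (Fin d)) 1,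
      ENNReal.ofReal (‖y‖ ^ (-δ)))
      + ∫⁻ y : EuclideanSpace ℝ (Fin d), ENNReal.ofReal (jb y ^ (-γ)),
    ENNReal.add_lt_top.2 ⟨lemA d δ hδ0 hδd, lemG d γ hγ⟩, fun x => ?_⟩
  rw [← lintegral_add_compl
    (fun y => ENNReal.ofReal (jb y ^ (-γ) * ‖x - y‖ ^ (-δ)))
    (measurableSet_ball (x := x) (ε := 1))]
  refine add_le_add ?_ ?_
  · -- on the unit ball around x
    have step1 : (∫⁻ y in Metric.ball x 1, ENNReal.ofReal (jb y ^ (-γ) * ‖x - y‖ ^ (-δ)))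
        ≤ ∫⁻ y in Metric.ball x 1, ENNReal.ofReal (‖x - y‖ ^ (-δ)) := by
      refine lintegral_mono fun y => ENNReal.ofReal_le_ofReal ?_
      calc jb y ^ (-γ) * ‖x - y‖ ^ (-δ) ≤ 1 * ‖x - y‖ ^ (-δ) := by
            apply mul_le_mul_of_nonneg_right _ (by positivity)
            exact Real.rpow_le_one_of_one_le_of_nonpos (jb_one_le y)
              (neg_nonpos.mpr (le_trans (Nat.cast_nonneg d) hγ.le))
        _ = ‖x - y‖ ^ (-δ) := one_mul _
    refine step1.trans (le_of_eq ?_)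
    have hT : MeasurePreserving (fun u : EuclideanSpace ℝ (Fin d) => x - u) volume volume :=
      Measure.measurePreserving_sub_left volume x
    have hemb : MeasurableEmbedding (fun u : EuclideanSpace ℝ (Fin d) => x - u) :=
      (MeasurableEquiv.subLeft x).measurableEmbedding
    have hpre : (fun u : EuclideanSpace ℝ (Fin d) => x - u) ⁻¹' Metric.ball 0 1
        = Metric.ball x 1 := by
      ext u
      simp [Metric.mem_ball, dist_eq_norm, norm_sub_rev]
    rw [← hpre,
      hT.setLIntegral_comp_preimage_emb hemb
        (fun y => ENNReal.ofReal (‖y‖ ^ (-δ))) (Metric.ball 0 1)]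
  · -- away from the unit ball around x
    calc (∫⁻ y in (Metric.ball x 1)ᶜ, ENNReal.ofReal (jb y ^ (-γ) * ‖x - y‖ ^ (-δ)))
        ≤ ∫⁻ y in (Metric.ball x 1)ᶜ, ENNReal.ofReal (jb y ^ (-γ)) := by
          refine setLIntegral_mono' measurableSet_ball.compl fun y hy => ?_
          refine ENNReal.ofReal_le_ofReal ?_
          have h1 : (1:ℝ) ≤ ‖x - y‖ := by
            simp only [mem_compl_iff, Metric.mem_ball, not_lt, dist_eq_norm] at hy
            rwa [norm_sub_rev]
          calc jb y ^ (-γ) * ‖x - y‖ ^ (-δ) ≤ jb y ^ (-γ) * 1 := by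
                apply mul_le_mul_of_nonneg_left _
                  (Real.rpow_nonneg (le_trans zero_le_one (jb_one_le y)) _)
                exact Real.rpow_le_one_of_one_le_of_nonpos h1 (neg_nonpos.mpr hδ0)
            _ = jb y ^ (-γ) := mul_one _
      _ ≤ ∫⁻ y : EuclideanSpace ℝ (Fin d), ENNReal.ofReal (jb y ^ (-γ)) :=
          setLIntegral_le_lintegral _ _

/-- For all `α, β ∈ [0, d/2)` and `γ ∈ (d, ∞)`, there is `K > 0` such that for all
`x, z ∈ ℝ^d` (allowing `x = z`) the integral
`∫_{ℝ^d \ {x,z}} ⟨y⟩^{-γ} |x − y|^{-α} |y − z|^{-β} dy` is at most `K`. -/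
theorem stmt2 (d : ℕ) (hd : 0 < d) (α β γ : ℝ) (hα0 : 0 ≤ α) (hαd : α < (d : ℝ) / 2)
    (hβ0 : 0 ≤ β) (hβd : β < (d : ℝ) / 2) (hγ : (d : ℝ) < γ) :
    ∃ K : ℝ, 0 < K ∧ ∀ x z : EuclideanSpace ℝ (Fin d),
      (∫⁻ y in (({x, z} : Set (EuclideanSpace ℝ (Fin d)))ᶜ),
        ENNReal.ofReal (jb y ^ (-γ) * ‖x - y‖ ^ (-α) * ‖y - z‖ ^ (-β)))
      ≤ ENNReal.ofReal K := by
  obtain ⟨C₁, hC₁, hC₁b⟩ := lemB d (2*α) γ (by linarith) (by linarith) hγ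
  obtain ⟨C₂, hC₂, hC₂b⟩ := lemB d (2*β) γ (by linarith) (by linarith) hγ
  refine ⟨(C₁ + C₂).toReal + 1, by positivity, fun x z => ?_⟩
  have hfin : C₁ + C₂ ≠ ⊤ := (ENNReal.add_lt_top.2 ⟨hC₁, hC₂⟩).ne
  have hK : C₁ + C₂ ≤ ENNReal.ofReal ((C₁ + C₂).toReal + 1) := by
    conv_lhs => rw [← ENNReal.ofReal_toReal hfin]
    exact ENNReal.ofReal_le_ofReal (by linarith)
  refine le_trans ?_ hK
  calc (∫⁻ y in (({x, z} : Set (EuclideanSpace ℝ (Fin d)))ᶜ),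
        ENNReal.ofReal (jb y ^ (-γ) * ‖x - y‖ ^ (-α) * ‖y - z‖ ^ (-β)))
      ≤ ∫⁻ y, ENNReal.ofReal (jb y ^ (-γ) * ‖x - y‖ ^ (-α) * ‖y - z‖ ^ (-β)) :=
        setLIntegral_le_lintegral _ _
    _ ≤ ∫⁻ y, (ENNReal.ofReal (jb y ^ (-γ) * ‖x - y‖ ^ (-(2*α))) +
          ENNReal.ofReal (jb y ^ (-γ) * ‖y - z‖ ^ (-(2*β)))) := by
        refine lintegral_mono fun y => ?_
        set a := ‖x - y‖ ^ (-α) with ha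
        set b := ‖y - z‖ ^ (-β) with hb
        have ha0 : 0 ≤ a := by positivity
        have hb0 : 0 ≤ b := by positivity
        have hab : jb y ^ (-γ) * a * b ≤
            jb y ^ (-γ) * ‖x - y‖ ^ (-(2*α)) + jb y ^ (-γ) * ‖y - z‖ ^ (-(2*β)) := by
          have h2a : a ^ 2 = ‖x - y‖ ^ (-(2*α)) := by
            rw [ha, ← Real.rpow_natCast (‖x - y‖ ^ (-α)) 2,
              ← Real.rpow_mul (norm_nonneg _)]
            norm_num
            ring_nf
          have h2b : b ^ 2 = ‖y - z‖ ^ (-(2*β)) := by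
            rw [hb, ← Real.rpow_natCast (‖y - z‖ ^ (-β)) 2,
              ← Real.rpow_mul (norm_nonneg _)]
            norm_num
            ring_nf
          rw [← h2a, ← h2b]
          have habsq : a * b ≤ a ^ 2 + b ^ 2 := by nlinarith [sq_nonneg (a - b), mul_nonneg ha0 hb0]
          have hjb : (0:ℝ) ≤ jb y ^ (-γ) :=
            Real.rpow_nonneg (le_trans zero_le_one (jb_one_le y)) _
          calc jb y ^ (-γ) * a * b = jb y ^ (-γ) * (a * b) := by ring
            _ ≤ jb y ^ (-γ) * (a ^ 2 + b ^ 2) := mul_le_mul_of_nonneg_left habsq hjb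
            _ = jb y ^ (-γ) * a ^ 2 + jb y ^ (-γ) * b ^ 2 := by ring
        refine le_trans (ENNReal.ofReal_le_ofReal hab) (ENNReal.ofReal_add_le)
    _ ≤ (∫⁻ y, ENNReal.ofReal (jb y ^ (-γ) * ‖x - y‖ ^ (-(2*α)))) +
          ∫⁻ y, ENNReal.ofReal (jb y ^ (-γ) * ‖y - z‖ ^ (-(2*β))) := by
        apply le_of_eq
        apply lintegral_add_left
        have hjbm : Measurable (jb : EuclideanSpace ℝ (Fin d) → ℝ) := by
          unfold jb; fun_prop
        fun_prop
    _ ≤ C₁ + C₂ := by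
        refine add_le_add (hC₁b x) (le_trans (le_of_eq ?_) (hC₂b z))
        refine lintegral_congr fun y => ?_
        rw [norm_sub_rev]
end

section
/- Let d and p be positive integers with p ≥ 2, and let β₁, …, β_p ∈ [0, d/2). Then the Lebesgue integral over the configuration space Conf_p (the set of p-tuples of pairwise distinct points of ℝ^d) of the function (x₁, …, x_p) ↦ ∏_{i=1}^p ⟨x_i⟩^{-(d+1)} · ∏_{i=1}^p ( min_{j ≠ i} |x_i − x_j| )^{-β_i} is finite. -/
open MeasureTheory

/-- The nearest-neighbor distance `min_{j ≠ i} |x_i − x_j|` (as the infimum of the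
nonempty finite set of distances to the other points). -/
noncomputable def nnd {d p : ℕ} (x : Fin p → EuclideanSpace ℝ (Fin d)) (i : Fin p) : ℝ :=
  sInf {r : ℝ | ∃ j : Fin p, j ≠ i ∧ r = ‖x i - x j‖}

/-!
Each nearest-neighbour factor is at most the sum over all other points,
`nnd x i ^ (-β i) ≤ ∑_{j ≠ i} |x i - x j| ^ (-β i)`, and expanding the product turns the integrand
into a sum over maps `σ` without fixed points of `∏ᵢ ⟨xᵢ⟩^{-(d+1)} |xᵢ - x_{σ i}|^{-βᵢ}`.
By AM-GM, `∏ᵢ |xᵢ - x_{σ i}|^{-βᵢ}` is at most the square of its part over `{i | σ i < i}` plus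
the square of its part over `{i | σ i > i}`; the exponents are now `2βᵢ < d`. In each of the two
terms every point is tied to at most one point lying on a fixed side of it, so the points can be
integrated out one at a time starting from the far end. Every step costs at most
`sup_a ∫ ⟨y⟩^{-(d+1)} |y - a|^{-2β} dy`, which is finite because `|z|^{-2β}` is integrable near `0`
and `⟨y⟩^{-(d+1)}` is integrable and at most `1`.
-/

open Finset Function Metric
open scoped ENNReal

theorem ENNReal.mul_le_sq_add_sq (a b : ℝ≥0∞) : a * b ≤ a ^ 2 + b ^ 2 := by
  rcases le_total a b with h | h
  · exact (mul_le_mul_left h b).trans (sq b ▸ le_add_self)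
  · exact (mul_le_mul_right h a).trans (sq a ▸ le_self_add)

theorem ENNReal.prod_le_prod_ite_sq_add_prod_ite_sq {ι : Type*} (s : Finset ι)
    (f : ι → ℝ≥0∞) (q : ι → Prop) [DecidablePred q] :
    ∏ i ∈ s, f i ≤
      ∏ i ∈ s, (if q i then f i ^ 2 else 1) + ∏ i ∈ s, (if ¬q i then f i ^ 2 else 1) := by
  rw [← prod_filter_mul_prod_filter_not s q, prod_ite, prod_ite]
  simpa only [prod_const_one, mul_one, prod_pow] using ENNReal.mul_le_sq_add_sq _ _

theorem ENNReal.ofReal_rpow_neg_sq {r : ℝ} (hr : 0 ≤ r) (b : ℝ) :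
    ENNReal.ofReal (r ^ (-b)) ^ 2 = ENNReal.ofReal (r ^ (-(2 * b))) := by
  rw [← ENNReal.ofReal_pow (Real.rpow_nonneg hr _), ← Real.rpow_mul_natCast hr]
  ring_nf

section Triangular

variable {ι κ : Type*} [DecidableEq ι] [LinearOrder κ] {X : ι → Type*}
  [∀ i, MeasurableSpace (X i)] {μ : ∀ i, Measure (X i)} [∀ i, SigmaFinite (μ i)]
  {g : ι → (∀ i, X i) → ℝ≥0∞} {c : ι → ℝ≥0∞}

theorem lmarginal_prod_le_prod_of_triangular (r : ι → κ) (hg : ∀ i, Measurable (g i))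
    (hdep : ∀ i j, j ≠ i → r i ≤ r j → ∀ x y, g i (update x j y) = g i x)
    (hc : ∀ i x, ∫⁻ y, g i (update x i y) ∂μ i ≤ c i) (s : Finset ι) (x : ∀ i, X i) :
    (∫⋯∫⁻_s, (fun x ↦ ∏ i ∈ s, g i x) ∂μ) x ≤ ∏ i ∈ s, c i := by
  induction s using Finset.induction_on_max_value r generalizing x with
  | empty => simp
  | insert a s has hmax ih =>
    have hslice : ∀ z, ∫⁻ y, ∏ i ∈ insert a s, g i (update z a y) ∂μ a ≤
        (∏ i ∈ s, g i z) * c a := by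
      intro z
      have hfactor : ∀ y, ∏ i ∈ insert a s, g i (update z a y) =
          (∏ i ∈ s, g i z) * g a (update z a y) := fun y ↦ by
        rw [prod_insert has, mul_comm]
        congr 1
        exact prod_congr rfl fun i hi ↦
          hdep i a (ne_of_mem_of_not_mem hi has).symm (hmax i hi) z y
      simp_rw [hfactor]
      exact (lintegral_const_mul _ ((hg a).comp (measurable_update z))).trans_le
        (mul_le_mul_right (hc a z) _)
    rw [lmarginal_insert' _ (measurable_prod _ fun i _ ↦ hg i) has]
    calc (∫⋯∫⁻_s, (fun z ↦ ∫⁻ y, ∏ i ∈ insert a s, g i (update z a y) ∂μ a) ∂μ) x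
        ≤ (∫⋯∫⁻_s, (fun z ↦ (∏ i ∈ s, g i z) * c a) ∂μ) x :=
          lmarginal_mono hslice x
      _ = (∫⋯∫⁻_s, (fun z ↦ ∏ i ∈ s, g i z) ∂μ) x * c a :=
        lintegral_mul_const _ ((measurable_prod _ fun i _ ↦ hg i).comp measurable_updateFinset)
      _ ≤ (∏ i ∈ s, c i) * c a := mul_le_mul_left (ih x) _
      _ = ∏ i ∈ insert a s, c i := by rw [prod_insert has, mul_comm]

theorem lintegral_pi_prod_le_prod_of_triangular [Fintype ι] (r : ι → κ)
    (hg : ∀ i, Measurable (g i))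
    (hdep : ∀ i j, j ≠ i → r i ≤ r j → ∀ x y, g i (update x j y) = g i x)
    (hc : ∀ i x, ∫⁻ y, g i (update x i y) ∂μ i ≤ c i) :
    ∫⁻ x, ∏ i, g i x ∂Measure.pi μ ≤ ∏ i, c i := by
  rcases isEmpty_or_nonempty (∀ i, X i) with h | ⟨⟨x⟩⟩
  · simp [lintegral_of_isEmpty]
  rw [lintegral_eq_lmarginal_univ x]
  exact lmarginal_prod_le_prod_of_triangular r hg hdep hc univ x

end Triangular

section SingularKernel

variable {E : Type*} [NormedAddCommGroup E] [MeasurableSpace E] [BorelSpace E]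
  {μ : Measure E}

theorem lintegral_mul_rpow_neg_norm_sub_le [μ.IsAddRightInvariant] {w : E → ℝ≥0∞}
    (hw : Measurable w) (hw1 : ∀ y, w y ≤ 1) {γ : ℝ} (hγ : 0 ≤ γ) (a : E) :
    ∫⁻ y, w y * ENNReal.ofReal (‖y - a‖ ^ (-γ)) ∂μ ≤
      (∫⁻ z in ball 0 1, ENNReal.ofReal (‖z‖ ^ (-γ)) ∂μ) + ∫⁻ y, w y ∂μ := by
  set k : E → ℝ≥0∞ := (ball 0 1).indicator fun z ↦ ENNReal.ofReal (‖z‖ ^ (-γ))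
  -- near `a` use `w ≤ 1`, away from `a` the kernel is at most `1`
  have hsplit : ∀ y, w y * ENNReal.ofReal (‖y - a‖ ^ (-γ)) ≤ k (y - a) + w y := by
    intro y
    by_cases hy : ‖y - a‖ < 1
    · have : k (y - a) = ENNReal.ofReal (‖y - a‖ ^ (-γ)) :=
        Set.indicator_of_mem (mem_ball_zero_iff.mpr hy) _
      rw [this]
      exact le_add_right (mul_le_of_le_one_left' (hw1 y))
    · refine le_add_left (mul_le_of_le_one_right' ?_)
      exact ENNReal.ofReal_le_one.mpr
        (Real.rpow_le_one_of_one_le_of_nonpos (not_lt.mp hy) (neg_nonpos.mpr hγ))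
  calc ∫⁻ y, w y * ENNReal.ofReal (‖y - a‖ ^ (-γ)) ∂μ
      ≤ ∫⁻ y, (k (y - a) + w y) ∂μ := lintegral_mono hsplit
    _ = (∫⁻ y, k (y - a) ∂μ) + ∫⁻ y, w y ∂μ := lintegral_add_right _ hw
    _ = (∫⁻ z in ball 0 1, ENNReal.ofReal (‖z‖ ^ (-γ)) ∂μ) + ∫⁻ y, w y ∂μ := by
      rw [lintegral_sub_right_eq_self k a, lintegral_indicator measurableSet_ball]

variable [NormedSpace ℝ E] [FiniteDimensional ℝ E] [μ.IsAddHaarMeasure]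

theorem setLIntegral_ball_rpow_neg_norm_lt_top (hE : 1 ≤ Module.finrank ℝ E) {γ : ℝ}
    (hγ : γ < Module.finrank ℝ E) :
    ∫⁻ z in ball 0 1, ENNReal.ofReal (‖z‖ ^ (-γ)) ∂μ < ⊤ := by
  refine Integrable.lintegral_lt_top (integrableOn_ball_of_norm_le_rpow (C := 1) hE hγ ?_
    (by fun_prop : Measurable fun z : E ↦ ‖z‖ ^ (-γ)).aestronglyMeasurable)
  exact Filter.Eventually.of_forall fun z ↦ by
    rw [one_mul, Real.norm_of_nonneg (by positivity)]

end SingularKernel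

section ForestWeight

variable {ι E : Type*} [Fintype ι] [NormedAddCommGroup E]

/-- Since `r ^ 0 = 1` also for `r = 0`, a zero exponent `e i` removes the edge from `i` to `σ i`:
the `i`-th factor is then just `w (x i)`. -/
noncomputable def forestWeight (w : E → ℝ≥0∞) (σ : ι → ι) (e : ι → ℝ) (x : ι → E) :
    ℝ≥0∞ :=
  ∏ i, w (x i) * ENNReal.ofReal (‖x i - x (σ i)‖ ^ (-e i))

theorem prod_mul_prod_le_forestWeight_add_forestWeight [LinearOrder ι] (w : E → ℝ≥0∞)
    (σ : ι → ι) (β : ι → ℝ) (x : ι → E) :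
    (∏ i, w (x i)) * ∏ i, ENNReal.ofReal (‖x i - x (σ i)‖ ^ (-β i)) ≤
      forestWeight w σ (fun i ↦ if σ i < i then 2 * β i else 0) x +
        forestWeight w σ (fun i ↦ if ¬σ i < i then 2 * β i else 0) x := by
  simp only [forestWeight, prod_mul_distrib, ← mul_add]
  gcongr
  refine (ENNReal.prod_le_prod_ite_sq_add_prod_ite_sq univ _ fun i ↦ σ i < i).trans_eq ?_
  congr 1 <;> refine prod_congr rfl fun i _ ↦ ?_ <;> split_ifs <;>
    simp [ENNReal.ofReal_rpow_neg_sq (norm_nonneg _)]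

variable [MeasurableSpace E] [BorelSpace E] {w : E → ℝ≥0∞} {σ : ι → ι} {e : ι → ℝ}

theorem measurable_forestWeight [SecondCountableTopology E] (hw : Measurable w) :
    Measurable (forestWeight w σ e) :=
  measurable_prod _ fun i _ ↦ (hw.comp (measurable_pi_apply i)).mul
    (((measurable_pi_apply i).sub (measurable_pi_apply (σ i))).norm.pow_const _).ennreal_ofReal

variable [DecidableEq ι] [NormedSpace ℝ E] [FiniteDimensional ℝ E] {μ : Measure E}
  [μ.IsAddHaarMeasure]

theorem lintegral_forestWeight_lt_top {κ : Type*} [LinearOrder κ]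
    (hE : 1 ≤ Module.finrank ℝ E)
    (hw : Measurable w) (hw1 : ∀ y, w y ≤ 1) (hw_int : ∫⁻ y, w y ∂μ < ⊤)
    (he0 : ∀ i, 0 ≤ e i) (he : ∀ i, e i < Module.finrank ℝ E)
    (r : ι → κ) (hr : ∀ i, e i ≠ 0 → r (σ i) < r i) :
    ∫⁻ x, forestWeight w σ e x ∂(Measure.pi fun _ ↦ μ) < ⊤ := by
  set c : ι → ℝ≥0∞ := fun i ↦
    (∫⁻ z in ball 0 1, ENNReal.ofReal (‖z‖ ^ (-e i)) ∂μ) + ∫⁻ y, w y ∂μ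
  have hdep : ∀ i j, j ≠ i → r i ≤ r j → ∀ (x : ι → E) y,
      w (update x j y i) * ENNReal.ofReal (‖update x j y i - update x j y (σ i)‖ ^ (-e i)) =
        w (x i) * ENNReal.ofReal (‖x i - x (σ i)‖ ^ (-e i)) := by
    intro i j hji hrij x y
    rcases eq_or_ne (e i) 0 with hei | hei
    · simp [hei, update_of_ne hji.symm]
    · have hσj : σ i ≠ j := fun h ↦ (h ▸ (hr i hei).trans_le hrij).false
      rw [update_of_ne hji.symm, update_of_ne hσj]
  have hc : ∀ i (x : ι → E), ∫⁻ y, w (update x i y i) *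
      ENNReal.ofReal (‖update x i y i - update x i y (σ i)‖ ^ (-e i)) ∂μ ≤ c i := by
    intro i x
    rcases eq_or_ne (e i) 0 with hei | hei
    · simpa [hei] using le_add_self
    · have hσi : σ i ≠ i := fun h ↦ (h ▸ hr i hei).false
      simp only [update_self, update_of_ne hσi]
      exact lintegral_mul_rpow_neg_norm_sub_le hw hw1 (he0 i) (x (σ i))
  calc ∫⁻ x, forestWeight w σ e x ∂(Measure.pi fun _ ↦ μ)
      ≤ ∏ i, c i := lintegral_pi_prod_le_prod_of_triangular r (fun i ↦ by fun_prop) hdep hc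
    _ < ⊤ := ENNReal.prod_lt_top fun i _ ↦ ENNReal.add_lt_top.mpr
        ⟨setLIntegral_ball_rpow_neg_norm_lt_top hE (he i), hw_int⟩

end ForestWeight

theorem jb_rpow_neg_le_one {n : ℕ} (y : EuclideanSpace ℝ (Fin n)) {r : ℝ} (hr : 0 ≤ r) :
    jb y ^ (-r) ≤ 1 :=
  Real.rpow_le_one_of_one_le_of_nonpos
    (Real.one_le_rpow (le_add_of_nonneg_right (by positivity)) (by norm_num)) (neg_nonpos.mpr hr)

theorem lintegral_jb_rpow_neg_lt_top {n : ℕ} {r : ℝ} (hr : n < r) :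
    ∫⁻ y : EuclideanSpace ℝ (Fin n), ENNReal.ofReal (jb y ^ (-r)) < ⊤ := by
  have hjb : ∀ y : EuclideanSpace ℝ (Fin n), jb y ^ (-r) = (1 + ‖y‖ ^ 2) ^ (-r / 2) := by
    intro y
    rw [jb, ← Real.rpow_mul (by positivity)]
    ring_nf
  simp_rw [hjb]
  exact (integrable_rpow_neg_one_add_norm_sq (by simpa using hr)).lintegral_lt_top

theorem exists_nnd_eq {d p : ℕ} (hp : 2 ≤ p) (x : Fin p → EuclideanSpace ℝ (Fin d))
    (i : Fin p) :
    ∃ j, j ≠ i ∧ nnd x i = ‖x i - x j‖ := by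
  have : Nontrivial (Fin p) := Fin.nontrivial_iff_two_le.mpr hp
  set S : Set ℝ := {r | ∃ j : Fin p, j ≠ i ∧ r = ‖x i - x j‖}
  have hfin : S.Finite :=
    (Set.finite_range fun j ↦ ‖x i - x j‖).subset fun r ⟨j, _, hr⟩ ↦ ⟨j, hr.symm⟩
  obtain ⟨j, hj⟩ := exists_ne i
  exact Set.Nonempty.csInf_mem (s := S) ⟨_, j, hj, rfl⟩ hfin

theorem ofReal_nnd_rpow_neg_le_sum {d p : ℕ} (hp : 2 ≤ p)
    (x : Fin p → EuclideanSpace ℝ (Fin d)) (i : Fin p) (b : ℝ) :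
    ENNReal.ofReal (nnd x i ^ (-b)) ≤
      ∑ j ∈ univ.erase i, ENNReal.ofReal (‖x i - x j‖ ^ (-b)) := by
  obtain ⟨j, hj, hnnd⟩ := exists_nnd_eq hp x i
  rw [hnnd]
  exact single_le_sum (f := fun j ↦ ENNReal.ofReal (‖x i - x j‖ ^ (-b))) (fun _ _ ↦ zero_le)
    (mem_erase.mpr ⟨hj, mem_univ j⟩)

theorem ofReal_integrand_le_sum_forestWeight {d p : ℕ} (hp : 2 ≤ p) (β : Fin p → ℝ)
    (x : Fin p → EuclideanSpace ℝ (Fin d)) :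
    ENNReal.ofReal ((∏ i, jb (x i) ^ (-((d : ℝ) + 1))) * ∏ i, nnd x i ^ (-(β i))) ≤
      ∑ σ ∈ Fintype.piFinset fun i ↦ univ.erase i,
        (forestWeight (fun y ↦ ENNReal.ofReal (jb y ^ (-((d : ℝ) + 1)))) σ
            (fun i ↦ if σ i < i then 2 * β i else 0) x +
          forestWeight (fun y ↦ ENNReal.ofReal (jb y ^ (-((d : ℝ) + 1)))) σ
            (fun i ↦ if ¬σ i < i then 2 * β i else 0) x) := by
  have hjb : ∀ i, 0 ≤ jb (x i) ^ (-((d : ℝ) + 1)) := fun i ↦ by unfold jb; positivity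
  have hnnd : ∀ i, 0 ≤ nnd x i ^ (-(β i)) := fun i ↦
    Real.rpow_nonneg (Real.sInf_nonneg (by rintro r ⟨j, -, rfl⟩; exact norm_nonneg _)) _
  rw [ENNReal.ofReal_mul (prod_nonneg fun i _ ↦ hjb i), ENNReal.ofReal_prod_of_nonneg
    (fun i _ ↦ hjb i), ENNReal.ofReal_prod_of_nonneg fun i _ ↦ hnnd i]
  calc (∏ i, ENNReal.ofReal (jb (x i) ^ (-((d : ℝ) + 1)))) *
        ∏ i, ENNReal.ofReal (nnd x i ^ (-(β i)))
      ≤ (∏ i, ENNReal.ofReal (jb (x i) ^ (-((d : ℝ) + 1)))) *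
        ∏ i, ∑ j ∈ univ.erase i, ENNReal.ofReal (‖x i - x j‖ ^ (-(β i))) := by
        gcongr with i
        exact ofReal_nnd_rpow_neg_le_sum hp x i _
    _ = ∑ σ ∈ Fintype.piFinset fun i ↦ univ.erase i,
          (∏ i, ENNReal.ofReal (jb (x i) ^ (-((d : ℝ) + 1)))) *
            ∏ i, ENNReal.ofReal (‖x i - x (σ i)‖ ^ (-(β i))) := by
        rw [prod_univ_sum, mul_sum]
    _ ≤ _ := sum_le_sum fun σ _ ↦ prod_mul_prod_le_forestWeight_add_forestWeight _ σ β x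

theorem lintegral_forestWeight_jb_lt_top {ι κ : Type*} [Fintype ι] [DecidableEq ι]
    [LinearOrder κ] {d : ℕ} (hd : 0 < d) {β : ι → ℝ} (hβ0 : ∀ i, 0 ≤ β i)
    (hβ : ∀ i, β i < (d : ℝ) / 2) (r : ι → κ) (σ : ι → ι) (q : ι → Prop)
    [DecidablePred q] (hq : ∀ i, q i → r (σ i) < r i) :
    ∫⁻ x, forestWeight
      (fun y : EuclideanSpace ℝ (Fin d) ↦ ENNReal.ofReal (jb y ^ (-((d : ℝ) + 1))))
      σ (fun i ↦ if q i then 2 * β i else 0) x < ⊤ := by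
  refine lintegral_forestWeight_lt_top (by rwa [finrank_euclideanSpace_fin])
    (by unfold jb; fun_prop)
    (fun y ↦ ENNReal.ofReal_le_one.mpr (jb_rpow_neg_le_one y (by positivity)))
    (lintegral_jb_rpow_neg_lt_top (by linarith)) (fun i ↦ ?_) (fun i ↦ ?_) r
    (fun i hi ↦ hq i (by_contra fun h ↦ hi (if_neg h)))
  · split_ifs <;> linarith [hβ0 i]
  · split_ifs <;> simp <;> linarith [hβ i]

/-- For `p ≥ 2` and exponents `β₁, …, β_p ∈ [0, d/2)`, the Lebesgue integral over the
configuration space `Conf_p` (tuples of pairwise distinct points) of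
`∏ᵢ ⟨xᵢ⟩^{-(d+1)} · ∏ᵢ (min_{j ≠ i} |xᵢ − xⱼ|)^{-βᵢ}` is finite. -/
theorem stmt8 (d p : ℕ) (hd : 0 < d) (hp : 2 ≤ p)
    (β : Fin p → ℝ) (hβ0 : ∀ i, 0 ≤ β i) (hβ : ∀ i, β i < (d : ℝ) / 2) :
    (∫⁻ x in {x : Fin p → EuclideanSpace ℝ (Fin d) | Function.Injective x},
      ENNReal.ofReal
        ((∏ i, jb (x i) ^ (-((d : ℝ) + 1))) * ∏ i, nnd x i ^ (-(β i)))) < ⊤ := by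
  have hw : Measurable fun y : EuclideanSpace ℝ (Fin d) ↦
      ENNReal.ofReal (jb y ^ (-((d : ℝ) + 1))) := by
    unfold jb; fun_prop
  refine (setLIntegral_le_lintegral _ _).trans_lt <|
    (lintegral_mono fun x ↦ ofReal_integrand_le_sum_forestWeight hp β x).trans_lt ?_
  rw [lintegral_finsetSum _ fun σ _ ↦ ((measurable_forestWeight hw).add
    (measurable_forestWeight hw) : Measurable fun x ↦ _ + _)]
  refine ENNReal.sum_lt_top.mpr fun σ hσ ↦ ?_
  rw [lintegral_add_left (measurable_forestWeight hw)]
  have hσ_ne : ∀ i, σ i ≠ i := fun i ↦ (mem_erase.mp (Fintype.mem_piFinset.mp hσ i)).1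
  refine ENNReal.add_lt_top.mpr
    ⟨lintegral_forestWeight_jb_lt_top hd hβ0 hβ id σ _ fun i hi ↦ hi,
      lintegral_forestWeight_jb_lt_top hd hβ0 hβ OrderDual.toDual σ _ fun i hi ↦ ?_⟩
  exact OrderDual.toDual_lt_toDual.mpr ((not_lt.mp hi).lt_of_ne' (hσ_ne i))
end

section
/- Let W be a finite nonempty set, X ⊆ W, and σ : W → W a map with σ(W) ⊆ X and σ(a) ≠ a for every a ∈ X. Consider the simple graph G on vertex set W whose edges are the pairs {a, σ(a)} for a ∈ W. Then every connected component of G contains at least two distinct elements of X; consequently, the number of connected components of G is at most |X| / 2. -/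
/-!
Every `w` is joined to `σ w` by an edge (as `σ w ∈ X` is not fixed, `σ w ≠ w`), so the
component of `w` contains `σ w` and `σ (σ w)`, two distinct points of `X`. In particular every
component meets `X`, so there are finitely many, and they partition `X` into blocks of size at
least two.
-/

/-- The simple graph on `W` whose edges are the pairs `{a, σ(a)}`, `a ∈ W`:
`a` and `b` are adjacent iff `a ≠ b` and (`b = σ(a)` or `a = σ(b)`). -/
def sigmaGraph {W : Type} (σ : W → W) : SimpleGraph W where
  Adj a b := a ≠ b ∧ (b = σ a ∨ a = σ b)
  symm := ⟨fun a b h => ⟨h.1.symm, h.2.symm⟩⟩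
  loopless := ⟨fun a h => h.1 rfl⟩

open Finset

theorem two_mul_natCard_le_card_of_fibers {α β : Type*} (f : α → β) (s : Finset α)
    (h : ∀ b, ∃ x y, x ∈ s ∧ y ∈ s ∧ x ≠ y ∧ f x = b ∧ f y = b) :
    2 * Nat.card β ≤ #s := by
  classical
  have : Finite β := Finite.of_surjective (fun x : s => f x) fun b =>
    let ⟨x, _, hx, _, _, hfx, _⟩ := h b
    ⟨⟨x, hx⟩, hfx⟩
  have := Fintype.ofFinite β
  rw [Nat.card_eq_fintype_card, ← card_univ]
  refine mul_card_image_le_card_of_maps_to (f := f) (fun _ _ => mem_univ _) 2 fun b _ => ?_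
  obtain ⟨x, y, hx, hy, hxy, hfx, hfy⟩ := h b
  exact one_lt_card_iff.2 ⟨x, y, by simp [hx, hfx], by simp [hy, hfy], hxy⟩

theorem sigmaGraph_adj_apply {W : Type} {σ : W → W} {a : W} (h : σ a ≠ a) :
    (sigmaGraph σ).Adj a (σ a) :=
  ⟨h.symm, Or.inl rfl⟩

theorem sigmaGraph_connectedComponentMk_apply {W : Type} {σ : W → W} {a : W} (h : σ a ≠ a) :
    (sigmaGraph σ).connectedComponentMk (σ a) = (sigmaGraph σ).connectedComponentMk a :=
  (SimpleGraph.ConnectedComponent.sound (sigmaGraph_adj_apply h).reachable).symm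

theorem stmt11_general (W : Type)
    (X : Finset W) (σ : W → W) (hσX : ∀ a : W, σ a ∈ X) (hσ : ∀ a ∈ X, σ a ≠ a) :
    (∀ c : (sigmaGraph σ).ConnectedComponent, ∃ a b : W, a ∈ X ∧ b ∈ X ∧ a ≠ b ∧
      (sigmaGraph σ).connectedComponentMk a = c ∧
      (sigmaGraph σ).connectedComponentMk b = c) ∧
    2 * Nat.card (sigmaGraph σ).ConnectedComponent ≤ X.card := by
  have hne : ∀ w, σ w ≠ w := fun w h => hσ w (h ▸ hσX w) h
  have two_in_X : ∀ c : (sigmaGraph σ).ConnectedComponent, ∃ a b : W, a ∈ X ∧ b ∈ X ∧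
      a ≠ b ∧ (sigmaGraph σ).connectedComponentMk a = c ∧
      (sigmaGraph σ).connectedComponentMk b = c := by
    refine SimpleGraph.ConnectedComponent.ind fun w => ?_
    have hw := sigmaGraph_connectedComponentMk_apply (hne w)
    exact ⟨σ w, σ (σ w), hσX w, hσX (σ w), (hne (σ w)).symm, hw,
      (sigmaGraph_connectedComponentMk_apply (hne (σ w))).trans hw⟩
  exact ⟨two_in_X, two_mul_natCard_le_card_of_fibers _ X two_in_X⟩

/-- If `σ : W → W` maps `W` into `X ⊆ W` and has no fixed point in `X`, then every
connected component of the graph with edge set `{ {a, σ(a)} : a ∈ W }` contains at least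
two distinct elements of `X`; consequently the number of connected components is at most
`|X|/2` (i.e. twice the number of components is at most `|X|`). -/
theorem stmt11 (W : Type) [Fintype W] [DecidableEq W] [Nonempty W]
    (X : Finset W) (σ : W → W) (hσX : ∀ a : W, σ a ∈ X) (hσ : ∀ a ∈ X, σ a ≠ a) :
    (∀ c : (sigmaGraph σ).ConnectedComponent, ∃ a b : W, a ∈ X ∧ b ∈ X ∧ a ≠ b ∧
      (sigmaGraph σ).connectedComponentMk a = c ∧
      (sigmaGraph σ).connectedComponentMk b = c) ∧
    2 * Nat.card (sigmaGraph σ).ConnectedComponent ≤ X.card :=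
  stmt11_general W X σ hσX hσ
end

section
/- Let d be a positive integer, k ∈ ℕ, K > 0, s ∈ [0, d), L > 1, and let r be an integer with r ≤ 0. Let C : ℝ^d × ℝ^d → ℝ be a measurable function satisfying C(y, z) ≥ K^{-1} |y − z|^{-s} ⟨y⟩^{-k} ⟨z⟩^{-k} for all y ≠ z in ℝ^d. Let ρ : ℝ^d → ℝ be a continuous nonnegative function supported in the closed unit ball B̄(0,1) with ∫_{ℝ^d} ρ = 1, and set ρ_r(x) := L^{-rd} ρ(L^{-r} x). Then for every x ∈ ℝ^d, ∫∫_{(y,z): y ≠ z} ρ_r(x − y) ρ_r(x − z) C(y, z) dy dz ≥ K̃ · ⟨x⟩^{-2k} · L^{-rs}, where K̃ := K^{-1} · 3^{-k} · ∫∫_{(u,v): u ≠ v} ρ(u) ρ(v) |u − v|^{-s} du dv, and K̃ > 0. -/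
/-!
Translating and rescaling by `t = L^{-r} ≥ 1` turns the mollified Riesz integrand
`ρ_r(x-y) ρ_r(x-z) |y-z|^{-s}` into `t^s` times the unscaled one, so its integral is
`L^{-rs} ∬ ρ(u)ρ(v)|u-v|^{-s}`. Where the integrand is nonzero, `y` and `z` lie within distance
`t⁻¹ ≤ 1` of `x`, hence `⟨y⟩⟨z⟩ ≤ 3⟨x⟩²`, and the lower bound on `C` follows pointwise.
The double integral is finite because `|·|^{-s}` is locally integrable for `s < d`, so the
convolution of `|ρ|` with it is continuous; it is positive because `ρ ≥ 0`, `∫ρ = 1` and the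
diagonal is null.
-/

open MeasureTheory

open Set Function Metric Module

section JapaneseBracket

variable {n : ℕ}

lemma jb_pos (y : EuclideanSpace ℝ (Fin n)) : 0 < jb y :=
  Real.rpow_pos_of_pos (by positivity) _

lemma jb_sq (y : EuclideanSpace ℝ (Fin n)) : jb y ^ 2 = 1 + ‖y‖ ^ 2 := by
  rw [jb, ← Real.rpow_natCast, ← Real.rpow_mul (by positivity)]
  norm_num

lemma jb_sq_le_three_mul_sq {x y : EuclideanSpace ℝ (Fin n)} (h : ‖x - y‖ ≤ 1) :
    jb y ^ 2 ≤ 3 * jb x ^ 2 := by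
  have hy : ‖y‖ ≤ ‖x‖ + 1 := by
    have := norm_sub_norm_le y x
    rw [norm_sub_rev] at this
    linarith
  rw [jb_sq, jb_sq]
  nlinarith [norm_nonneg y, sq_nonneg (‖x‖ - 1)]

lemma jb_mul_jb_le {x y z : EuclideanSpace ℝ (Fin n)} (hy : ‖x - y‖ ≤ 1) (hz : ‖x - z‖ ≤ 1) :
    jb y * jb z ≤ 3 * jb x ^ 2 := by
  refine le_of_pow_le_pow_left₀ two_ne_zero (by positivity) ?_
  rw [mul_pow, mul_pow 3]
  nlinarith [jb_sq_le_three_mul_sq hy, jb_sq_le_three_mul_sq hz, sq_nonneg (jb y),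
    sq_nonneg (jb x)]

lemma three_rpow_neg_mul_jb_rpow_neg_le {x y z : EuclideanSpace ℝ (Fin n)} (hy : ‖x - y‖ ≤ 1)
    (hz : ‖x - z‖ ≤ 1) {k : ℝ} (hk : 0 ≤ k) :
    3 ^ (-k) * jb x ^ (-(2 * k)) ≤ jb y ^ (-k) * jb z ^ (-k) :=
  calc 3 ^ (-k) * jb x ^ (-(2 * k)) = (3 * jb x ^ 2) ^ (-k) := by
        rw [Real.mul_rpow (by norm_num) (by positivity), ← Real.rpow_natCast,
          ← Real.rpow_mul (jb_pos x).le]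
        ring_nf
    _ ≤ (jb y * jb z) ^ (-k) :=
        Real.rpow_le_rpow_of_nonpos (mul_pos (jb_pos y) (jb_pos z)) (jb_mul_jb_le hy hz)
          (neg_nonpos.2 hk)
    _ = jb y ^ (-k) * jb z ^ (-k) := Real.mul_rpow (jb_pos y).le (jb_pos z).le

lemma kernel_lower_bound_near_center
    {C : EuclideanSpace ℝ (Fin n) → EuclideanSpace ℝ (Fin n) → ℝ} {K s k : ℝ} (hK : 0 ≤ K)
    (hk : 0 ≤ k) (hC : ∀ y z, y ≠ z → K⁻¹ * ‖y - z‖ ^ (-s) * jb y ^ (-k) * jb z ^ (-k) ≤ C y z)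
    {x y z : EuclideanSpace ℝ (Fin n)} (hy : ‖x - y‖ ≤ 1) (hz : ‖x - z‖ ≤ 1) (hyz : y ≠ z) :
    K⁻¹ * 3 ^ (-k) * jb x ^ (-(2 * k)) * ‖y - z‖ ^ (-s) ≤ C y z :=
  calc K⁻¹ * 3 ^ (-k) * jb x ^ (-(2 * k)) * ‖y - z‖ ^ (-s)
      = K⁻¹ * ‖y - z‖ ^ (-s) * (3 ^ (-k) * jb x ^ (-(2 * k))) := by ring
    _ ≤ K⁻¹ * ‖y - z‖ ^ (-s) * (jb y ^ (-k) * jb z ^ (-k)) :=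
      mul_le_mul_of_nonneg_left (three_rpow_neg_mul_jb_rpow_neg_le hy hz hk) (by positivity)
    _ = K⁻¹ * ‖y - z‖ ^ (-s) * jb y ^ (-k) * jb z ^ (-k) := by ring
    _ ≤ C y z := hC y z hyz

end JapaneseBracket

lemma ae_fst_ne_snd {α : Type*} [MeasurableSpace α] [MeasurableEq α] (μ : Measure α)
    [SFinite μ] [NullSingletonClass μ] : ∀ᵐ q ∂μ.prod μ, q.1 ≠ q.2 := by
  rw [ae_iff, Measure.prod_apply (by simpa [diagonal] using measurableSet_diagonal (α := α))]
  simp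

section KernelBound

variable {E : Type*} [NormedAddCommGroup E] [NormedSpace ℝ E]

lemma norm_le_one_of_smul_mem_closedBall {t : ℝ} (ht : 1 ≤ t) {v : E}
    (hv : t • v ∈ closedBall (0 : E) 1) : ‖v‖ ≤ 1 := by
  rw [mem_closedBall_zero_iff, norm_smul, Real.norm_of_nonneg (by linarith)] at hv
  nlinarith [norm_nonneg v]

lemma mul_le_mollified_kernel {C : E → E → ℝ} {c s t D : ℝ} {x : E}
    (hC : ∀ y z, ‖x - y‖ ≤ 1 → ‖x - z‖ ≤ 1 → y ≠ z → c * ‖y - z‖ ^ (-s) ≤ C y z)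
    (ht : 1 ≤ t) (hD : 0 ≤ D) {ρ : E → ℝ} (hρ0 : 0 ≤ ρ)
    (hρsupp : support ρ ⊆ closedBall 0 1) {y z : E} (hyz : y ≠ z) :
    c * (D * ρ (t • (x - y)) * (D * ρ (t • (x - z))) * ‖y - z‖ ^ (-s)) ≤
      D * ρ (t • (x - y)) * (D * ρ (t • (x - z))) * C y z := by
  by_cases hy : ρ (t • (x - y)) = 0
  · simp [hy]
  by_cases hz : ρ (t • (x - z)) = 0
  · simp [hz]
  have hxy := norm_le_one_of_smul_mem_closedBall ht (hρsupp hy)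
  have hxz := norm_le_one_of_smul_mem_closedBall ht (hρsupp hz)
  have hw : 0 ≤ D * ρ (t • (x - y)) * (D * ρ (t • (x - z))) :=
    mul_nonneg (mul_nonneg hD (hρ0 _)) (mul_nonneg hD (hρ0 _))
  calc c * (D * ρ (t • (x - y)) * (D * ρ (t • (x - z))) * ‖y - z‖ ^ (-s))
      = D * ρ (t • (x - y)) * (D * ρ (t • (x - z))) * (c * ‖y - z‖ ^ (-s)) := by ring
    _ ≤ D * ρ (t • (x - y)) * (D * ρ (t • (x - z))) * C y z :=
      mul_le_mul_of_nonneg_left (hC y z hxy hxz hyz) hw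

end KernelBound

section RieszEnergy

variable {E : Type*} [NormedAddCommGroup E] [NormedSpace ℝ E] [FiniteDimensional ℝ E]
  [MeasurableSpace E] [BorelSpace E] (μ : Measure E) [μ.IsAddHaarMeasure]

lemma lintegral_comp_add_smul (f : E → ENNReal) (a : E) {c : ℝ} (hc : c ≠ 0) :
    ∫⁻ q, f (a + c • q) ∂μ = ENNReal.ofReal |(c ^ finrank ℝ E)⁻¹| * ∫⁻ p, f p ∂μ := by
  rw [← lintegral_add_left_eq_self f a, ← smul_eq_mul, ← lintegral_smul_measure,
    ← Measure.map_addHaar_smul μ hc]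
  exact ((measurableEmbedding_const_smul₀ (α := E) hc).lintegral_map (μ := μ)
    (fun p => f (a + p))).symm

lemma lintegral_rescaled_riesz_energy (ρ : E → ℝ) (s : ℝ) (x : E) {t : ℝ} (ht : 0 < t) :
    ∫⁻ q, ENNReal.ofReal (t ^ finrank ℝ E * ρ (t • (x - q.1)) *
        (t ^ finrank ℝ E * ρ (t • (x - q.2))) * ‖q.1 - q.2‖ ^ (-s)) ∂μ.prod μ =
      ENNReal.ofReal (t ^ s) *
        ∫⁻ q, ENNReal.ofReal (ρ q.1 * ρ q.2 * ‖q.1 - q.2‖ ^ (-s)) ∂μ.prod μ := by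
  set n := finrank ℝ E
  set G : E × E → ℝ := fun p => ρ p.1 * ρ p.2 * ‖p.1 - p.2‖ ^ (-s)
  have hpt : ∀ q : E × E, t ^ n * ρ (t • (x - q.1)) * (t ^ n * ρ (t • (x - q.2))) *
      ‖q.1 - q.2‖ ^ (-s) = t ^ (n + n) * t ^ s * G (t • (x, x) + (-t) • q) := by
    rintro ⟨y, z⟩
    have hnorm : ‖(t • x + -t • y) - (t • x + -t • z)‖ = t * ‖y - z‖ := by
      rw [show (t • x + -t • y) - (t • x + -t • z) = t • (z - y) by module, norm_smul,
        Real.norm_of_nonneg ht.le, norm_sub_rev]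
    have hts : t ^ s * t ^ (-s) = 1 := by rw [← Real.rpow_add ht]; simp
    simp only [G, Prod.smul_mk, Prod.mk_add_mk, hnorm, Real.mul_rpow ht.le (norm_nonneg _)]
    rw [smul_sub, smul_sub, sub_eq_add_neg (t • x), sub_eq_add_neg (t • x), ← neg_smul,
      ← neg_smul]
    linear_combination -(t ^ n * ρ (t • x + -t • y) * (t ^ n * ρ (t • x + -t • z)) *
      ‖y - z‖ ^ (-s)) * hts
  have hscale := lintegral_comp_add_smul (μ.prod μ) (fun p => ENNReal.ofReal (G p)) (t • (x, x))
    (neg_ne_zero.2 ht.ne')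
  beta_reduce at hscale
  rw [lintegral_congr fun q => by rw [hpt q, ENNReal.ofReal_mul (by positivity)],
    lintegral_const_mul' _ _ ENNReal.ofReal_ne_top, hscale, finrank_prod, Even.neg_pow ⟨n, rfl⟩,
    abs_of_nonneg (by positivity), ← mul_assoc, ← ENNReal.ofReal_mul (by positivity)]
  congr 2
  field_simp

lemma integrable_riesz_energy {s : ℝ} (hd : 1 ≤ finrank ℝ E) (hs : s < finrank ℝ E)
    {ρ : E → ℝ} (hρc : Continuous ρ) (hρs : HasCompactSupport ρ) :
    Integrable (fun q : E × E => ρ q.1 * ρ q.2 * ‖q.1 - q.2‖ ^ (-s)) (μ.prod μ) := by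
  have hk : LocallyIntegrable (fun w : E => ‖w‖ ^ (-s)) μ :=
    locallyIntegrable_of_norm_le_rpow (C := 1) hd hs
      (ae_of_all _ fun w => by simp [abs_of_nonneg (Real.rpow_nonneg (norm_nonneg w) _)])
      (by fun_prop : Measurable fun w : E => ‖w‖ ^ (-s)).aestronglyMeasurable
  have hconv := hρs.convolutionExists_left (ContinuousLinearMap.lsmul ℝ ℝ) hρc hk
  have hcont := hρs.norm.continuous_convolution_left (ContinuousLinearMap.lsmul ℝ ℝ) hρc.norm hk
  have hmeas : Measurable fun q : E × E => ρ q.1 * ρ q.2 * ‖q.1 - q.2‖ ^ (-s) := by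
    have := hρc.measurable
    fun_prop
  rw [integrable_prod_iff hmeas.aestronglyMeasurable]
  refine ⟨ae_of_all _ fun u => ?_, ?_⟩
  · simpa [mul_assoc] using (hconv u).integrable.const_mul (ρ u)
  · refine ((hρc.norm.mul hcont).integrable_of_hasCompactSupport (μ := μ)
      hρs.norm.mul_right).congr (ae_of_all _ fun u => ?_)
    simp [convolution_lsmul, ← integral_const_mul, mul_assoc,
      abs_of_nonneg (Real.rpow_nonneg (norm_nonneg _) _)]

lemma riesz_energy_pos [NullSingletonClass μ] {s : ℝ} {ρ : E → ℝ} (hρ0 : 0 ≤ ρ)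
    (hρ : ∫ x, ρ x ∂μ ≠ 0)
    (hint : Integrable (fun q : E × E => ρ q.1 * ρ q.2 * ‖q.1 - q.2‖ ^ (-s)) (μ.prod μ)) :
    0 < ∫ q, ρ q.1 * ρ q.2 * ‖q.1 - q.2‖ ^ (-s) ∂μ.prod μ := by
  have hg0 : 0 ≤ fun q : E × E => ρ q.1 * ρ q.2 * ‖q.1 - q.2‖ ^ (-s) := fun q =>
    mul_nonneg (mul_nonneg (hρ0 _) (hρ0 _)) (Real.rpow_nonneg (norm_nonneg _) _)
  have hsupp : μ (support ρ) ≠ 0 := fun h =>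
    hρ (integral_eq_zero_of_ae ((Measure.measure_support_eq_zero_iff μ).1 h))
  rw [integral_pos_iff_support_of_nonneg hg0 hint]
  calc 0 < μ (support ρ) * μ (support ρ) := ENNReal.mul_pos hsupp hsupp
    _ = (μ.prod μ) (support ρ ×ˢ support ρ ∩ {q | q.1 ≠ q.2}) := by
        rw [measure_inter_conull (mem_ae_iff.1 (ae_fst_ne_snd μ)), Measure.prod_prod]
    _ ≤ _ := measure_mono fun q ⟨⟨h1, h2⟩, h12⟩ => mul_ne_zero (mul_ne_zero h1 h2)
        (Real.rpow_pos_of_pos (norm_pos_iff.2 (sub_ne_zero.2 h12)) _).ne'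

lemma ofReal_mul_riesz_energy_le_lintegral_mollified [NullSingletonClass μ] {C : E → E → ℝ}
    {c s t : ℝ} {x : E} (hc : 0 ≤ c)
    (hC : ∀ y z, ‖x - y‖ ≤ 1 → ‖x - z‖ ≤ 1 → y ≠ z → c * ‖y - z‖ ^ (-s) ≤ C y z)
    (ht : 1 ≤ t) {ρ : E → ℝ} (hρ0 : 0 ≤ ρ) (hρsupp : support ρ ⊆ closedBall 0 1)
    (hint : Integrable (fun q : E × E => ρ q.1 * ρ q.2 * ‖q.1 - q.2‖ ^ (-s)) (μ.prod μ)) :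
    ENNReal.ofReal (c * (t ^ s * ∫ q, ρ q.1 * ρ q.2 * ‖q.1 - q.2‖ ^ (-s) ∂μ.prod μ)) ≤
      ∫⁻ q, ENNReal.ofReal (t ^ finrank ℝ E * ρ (t • (x - q.1)) *
        (t ^ finrank ℝ E * ρ (t • (x - q.2))) * C q.1 q.2) ∂μ.prod μ :=
  calc _ = ENNReal.ofReal c * (ENNReal.ofReal (t ^ s) *
          ∫⁻ q, ENNReal.ofReal (ρ q.1 * ρ q.2 * ‖q.1 - q.2‖ ^ (-s)) ∂μ.prod μ) := by
        rw [ENNReal.ofReal_mul hc, ENNReal.ofReal_mul (by positivity),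
          ofReal_integral_eq_lintegral_ofReal hint (ae_of_all _ fun q =>
            mul_nonneg (mul_nonneg (hρ0 _) (hρ0 _)) (Real.rpow_nonneg (norm_nonneg _) _))]
    _ = ∫⁻ q, ENNReal.ofReal (c * (t ^ finrank ℝ E * ρ (t • (x - q.1)) *
          (t ^ finrank ℝ E * ρ (t • (x - q.2))) * ‖q.1 - q.2‖ ^ (-s))) ∂μ.prod μ := by
        rw [← lintegral_rescaled_riesz_energy μ _ _ x (by linarith),
          ← lintegral_const_mul' _ _ ENNReal.ofReal_ne_top]
        simp_rw [ENNReal.ofReal_mul hc]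
    _ ≤ _ := lintegral_mono_ae <| (ae_fst_ne_snd μ).mono fun _ hq =>
        ENNReal.ofReal_le_ofReal <| mul_le_mollified_kernel hC ht (by positivity) hρ0 hρsupp hq

end RieszEnergy

theorem stmt12_general (d k : ℕ) (hd : 0 < d) (K : ℝ) (hK : 0 < K)
    (s : ℝ) (hsd : s < d) (L : ℝ) (hL : 1 < L) (r : ℤ) (hr : r ≤ 0)
    (C : EuclideanSpace ℝ (Fin d) → EuclideanSpace ℝ (Fin d) → ℝ)
    (hC : ∀ y z : EuclideanSpace ℝ (Fin d), y ≠ z →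
      K⁻¹ * ‖y - z‖ ^ (-s) * jb y ^ (-(k : ℝ)) * jb z ^ (-(k : ℝ)) ≤ C y z)
    (ρ : EuclideanSpace ℝ (Fin d) → ℝ) (hρc : Continuous ρ) (hρ0 : ∀ x, 0 ≤ ρ x)
    (hρsupp : Function.support ρ ⊆ Metric.closedBall 0 1) (hρint : ∫ x, ρ x = 1) :
    (0 < K⁻¹ * 3 ^ (-(k : ℝ)) *
        ∫ q in {q : EuclideanSpace ℝ (Fin d) × EuclideanSpace ℝ (Fin d) | q.1 ≠ q.2},
          ρ q.1 * ρ q.2 * ‖q.1 - q.2‖ ^ (-s)) ∧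
    ∀ x : EuclideanSpace ℝ (Fin d),
      ENNReal.ofReal
        ((K⁻¹ * 3 ^ (-(k : ℝ)) *
          ∫ q in {q : EuclideanSpace ℝ (Fin d) × EuclideanSpace ℝ (Fin d) | q.1 ≠ q.2},
            ρ q.1 * ρ q.2 * ‖q.1 - q.2‖ ^ (-s)) *
          jb x ^ (-(2 * k : ℝ)) * L ^ (-(r : ℝ) * s))
      ≤ ∫⁻ q in {q : EuclideanSpace ℝ (Fin d) × EuclideanSpace ℝ (Fin d) | q.1 ≠ q.2},
          ENNReal.ofReal
            ((L ^ (-(r : ℝ) * d) * ρ ((L ^ (-(r : ℝ))) • (x - q.1))) *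
             (L ^ (-(r : ℝ) * d) * ρ ((L ^ (-(r : ℝ))) • (x - q.2))) * C q.1 q.2) := by
  have : Nonempty (Fin d) := ⟨⟨0, hd⟩⟩
  have hfin : finrank ℝ (EuclideanSpace ℝ (Fin d)) = d := finrank_euclideanSpace_fin
  have hρs : HasCompactSupport ρ := HasCompactSupport.intro (isCompact_closedBall 0 1)
    fun _ hx => notMem_support.1 (hx ∘ (hρsupp ·))
  have hint := integrable_riesz_energy volume (by rwa [hfin]) (by rwa [hfin]) hρc hρs
  have henergy_pos := riesz_energy_pos volume hρ0 (by rw [hρint]; exact one_ne_zero) hint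
  have hS : (volume.prod volume).restrict
      {q : EuclideanSpace ℝ (Fin d) × EuclideanSpace ℝ (Fin d) | q.1 ≠ q.2} =
      volume.prod volume := Measure.restrict_eq_self_of_ae_mem (ae_fst_ne_snd volume)
  rw [Measure.volume_eq_prod, hS]
  refine ⟨by positivity, fun x => ?_⟩
  set t := L ^ (-(r : ℝ))
  have ht : 1 ≤ t := Real.one_le_rpow hL.le (by exact_mod_cast neg_nonneg.2 hr)
  have hLd : L ^ (-(r : ℝ) * d) = t ^ finrank ℝ (EuclideanSpace ℝ (Fin d)) := by
    rw [hfin, Real.rpow_mul (by linarith), Real.rpow_natCast]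
  rw [hLd, Real.rpow_mul (by linarith)]
  convert ofReal_mul_riesz_energy_le_lintegral_mollified volume
    (c := K⁻¹ * 3 ^ (-(k : ℝ)) * jb x ^ (-(2 * k : ℝ))) (by have := jb_pos x; positivity)
    (fun y z hy hz hyz => kernel_lower_bound_near_center hK.le k.cast_nonneg hC hy hz hyz)
    ht hρ0 hρsupp hint using 2
  ring

/-- Lower bound for the mollified OPE normalization integral.  If
`C(y,z) ≥ K⁻¹ |y−z|^{-s} ⟨y⟩^{-k} ⟨z⟩^{-k}` off the diagonal, `ρ` is a continuous
nonnegative mollifier supported in the unit ball with `∫ρ = 1`, and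
`ρ_r(x) = L^{-rd} ρ(L^{-r}x)` with `r ≤ 0`, `L > 1`, then for all `x`,
`∬_{y≠z} ρ_r(x−y) ρ_r(x−z) C(y,z) ≥ K̃ ⟨x⟩^{-2k} L^{-rs}` where
`K̃ = K⁻¹ 3^{-k} ∬_{u≠v} ρ(u)ρ(v)|u−v|^{-s} > 0`. -/
theorem stmt12 (d k : ℕ) (hd : 0 < d) (K : ℝ) (hK : 0 < K)
    (s : ℝ) (hs0 : 0 ≤ s) (hsd : s < d) (L : ℝ) (hL : 1 < L) (r : ℤ) (hr : r ≤ 0)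
    (C : EuclideanSpace ℝ (Fin d) → EuclideanSpace ℝ (Fin d) → ℝ)
    (hCm : Measurable fun q : EuclideanSpace ℝ (Fin d) × EuclideanSpace ℝ (Fin d) =>
      C q.1 q.2)
    (hC : ∀ y z : EuclideanSpace ℝ (Fin d), y ≠ z →
      K⁻¹ * ‖y - z‖ ^ (-s) * jb y ^ (-(k : ℝ)) * jb z ^ (-(k : ℝ)) ≤ C y z)
    (ρ : EuclideanSpace ℝ (Fin d) → ℝ) (hρc : Continuous ρ) (hρ0 : ∀ x, 0 ≤ ρ x)
    (hρsupp : Function.support ρ ⊆ Metric.closedBall 0 1) (hρint : ∫ x, ρ x = 1) :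
    (0 < K⁻¹ * 3 ^ (-(k : ℝ)) *
        ∫ q in {q : EuclideanSpace ℝ (Fin d) × EuclideanSpace ℝ (Fin d) | q.1 ≠ q.2},
          ρ q.1 * ρ q.2 * ‖q.1 - q.2‖ ^ (-s)) ∧
    ∀ x : EuclideanSpace ℝ (Fin d),
      ENNReal.ofReal
        ((K⁻¹ * 3 ^ (-(k : ℝ)) *
          ∫ q in {q : EuclideanSpace ℝ (Fin d) × EuclideanSpace ℝ (Fin d) | q.1 ≠ q.2},
            ρ q.1 * ρ q.2 * ‖q.1 - q.2‖ ^ (-s)) *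
          jb x ^ (-(2 * k : ℝ)) * L ^ (-(r : ℝ) * s))
      ≤ ∫⁻ q in {q : EuclideanSpace ℝ (Fin d) × EuclideanSpace ℝ (Fin d) | q.1 ≠ q.2},
          ENNReal.ofReal
            ((L ^ (-(r : ℝ) * d) * ρ ((L ^ (-(r : ℝ))) • (x - q.1))) *
             (L ^ (-(r : ℝ) * d) * ρ ((L ^ (-(r : ℝ))) • (x - q.2))) * C q.1 q.2) :=
  stmt12_general d k hd K hK s hsd L hL r hr C hC ρ hρc hρ0 hρsupp hρint
end
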